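/- Fix an integer D ≥ 2 and let Q ⊆ {0,1}^{D−1} be any set of queried prefixes with |Q| ≤ 2^{D−1} − 2. Then there exist distinct hidden strings ŝ, ŝ' ∈ {0,1}^{D−1} \ Q such that: (i) p_ŝ(s) = p_{ŝ'}(s) for every s ∈ {0,1}^D whose first D−1 bits lie in Q; and (ii) the unique even-digit-sum string in the support of p_ŝ differs from the unique even-digit-sum string in the support of p_{ŝ'}. Hence any output that is correct (positive probability and even digit sum) for the oracle indexed by ŝ is incorrect for the oracle indexed by ŝ', even though the two oracles agree on all queried prefixes. -/

import Mathlib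

open scoped BigOperators

/-- The number of `1`-bits (`true` bits) of a bit string, i.e. `∑ i, s i`. -/
def bitSum {n : ℕ} (s : Fin n → Bool) : ℕ := ∑ i, if s i then 1 else 0

/-- The `(D-1)`-bit prefix of a `D`-bit string. -/
def pre (D : ℕ) (s : Fin D → Bool) : Fin (D - 1) → Bool :=
  fun i => s (Fin.castLE (Nat.sub_le D 1) i)

/-- The oracle pmf `p_ŝ` on `{0,1}^D`: it assigns mass `2^{-(D-1)}` to a string `s`
whose last bit makes the total digit sum even when the `(D-1)`-prefix of `s` equals `ŝ`,
and odd when the prefix differs from `ŝ`; all other strings get mass `0`. -/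
noncomputable def hiddenPMF (D : ℕ) (shat : Fin (D - 1) → Bool) (s : Fin D → Bool) : ℝ :=
  if (pre D s = shat ↔ Even (bitSum s)) then ((2 : ℝ) ^ (D - 1))⁻¹ else 0

/-! Off its own prefix `ŝ`, the oracle `p_ŝ` gives mass `2^{-(D-1)}` exactly to the strings of odd
digit sum, independently of `ŝ`. Hence any two distinct unqueried hidden strings, which exist by
counting, agree on all queried prefixes, while the even-sum output of `p_ŝ` has prefix `ŝ`, so the
two valid outputs differ. -/

theorem Finset.exists_ne_of_card_add_two_le {α : Type*} [Fintype α] [DecidableEq α]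
    (Q : Finset α) (hQ : Q.card + 2 ≤ Fintype.card α) :
    ∃ a b : α, a ≠ b ∧ a ∉ Q ∧ b ∉ Q := by
  have hcompl : 1 < Qᶜ.card := by
    rw [Finset.card_compl]
    omega
  obtain ⟨a, ha, b, hb, hab⟩ := Finset.one_lt_card.mp hcompl
  exact ⟨a, b, hab, Finset.mem_compl.mp ha, Finset.mem_compl.mp hb⟩

section HiddenPMF

variable {D : ℕ} {shat : Fin (D - 1) → Bool} {s : Fin D → Bool}

theorem hiddenPMF_of_pre_ne (h : pre D s ≠ shat) :
    hiddenPMF D shat s = if Even (bitSum s) then 0 else ((2 : ℝ) ^ (D - 1))⁻¹ := by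
  by_cases he : Even (bitSum s) <;> simp [hiddenPMF, h, he]

theorem pre_eq_of_hiddenPMF_pos_of_even (hpos : 0 < hiddenPMF D shat s)
    (he : Even (bitSum s)) : pre D s = shat := by
  by_contra h
  simp [hiddenPMF_of_pre_ne h, he] at hpos

end HiddenPMF

/-- For any set `Q` of queried prefixes with `|Q| ≤ 2^{D-1} - 2`, there exist distinct
unqueried hidden strings `ŝ, ŝ'` whose oracles agree on all full strings whose `(D-1)`-prefix
lies in `Q`, yet whose unique valid outputs (positive probability and even digit sum)
differ. -/
theorem stmt4 (D : ℕ) (hD : 2 ≤ D) (Q : Finset (Fin (D - 1) → Bool))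
    (hQ : Q.card ≤ 2 ^ (D - 1) - 2) :
    ∃ shat shat' : Fin (D - 1) → Bool, shat ≠ shat' ∧ shat ∉ Q ∧ shat' ∉ Q ∧
      (∀ s : Fin D → Bool, pre D s ∈ Q → hiddenPMF D shat s = hiddenPMF D shat' s) ∧
      (∀ s s' : Fin D → Bool,
        0 < hiddenPMF D shat s → Even (bitSum s) →
        0 < hiddenPMF D shat' s' → Even (bitSum s') → s ≠ s') := by
  have hpow : 2 ≤ 2 ^ (D - 1) := Nat.le_self_pow (by omega) 2
  have hcard : Q.card + 2 ≤ Fintype.card (Fin (D - 1) → Bool) := by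
    rw [Fintype.card_fun, Fintype.card_bool, Fintype.card_fin]
    omega
  obtain ⟨a, b, hab, ha, hb⟩ := Q.exists_ne_of_card_add_two_le hcard
  refine ⟨a, b, hab, ha, hb, fun s hs => ?_, fun s s' hs hse hs' hse' hss' => ?_⟩
  · rw [hiddenPMF_of_pre_ne (ne_of_mem_of_not_mem hs ha),
      hiddenPMF_of_pre_ne (ne_of_mem_of_not_mem hs hb)]
  · apply hab
    rw [← pre_eq_of_hiddenPMF_pos_of_even hs hse, ← pre_eq_of_hiddenPMF_pos_of_even hs' hse', hss']
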